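/- For all nonnegative integers n, m, p, all nonnegative integers a and all positive integers b, c, the following identity holds in ℚ(q): Σ_{k=0}^{n} Σ_{l=0}^{n−k} (−1)^k · q^{a·C(n−k−l,2)+b·C(k,2)} · [p+n−k−l choose p]_{q^c} · [m+1 choose k]_{q^b} · [m+l choose m]_{q^b} = q^{a·C(n,2)} · [p+n choose p]_{q^c}. -/

import Mathlib

/-!
Grouping the terms by `j = k + l`, the factor `q^(a C(n-j,2)) [p+n-j choose p]_{q^c}` depends on `j`
only, and with `x = q^b` what remains is the coefficient of `t^j` in `A_m(t) B_m(t)`, where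
`A_m(t) = ∑_k (-1)^k x^C(k,2) [m+1 choose k]_x t^k` and `B_m(t) = ∑_l [m+l choose m]_x t^l`.
The two q-Pascal rules give `A_{m+1} = (1 - x^{m+1} t) A_m` and `(1 - x^{m+1} t) B_{m+1} = B_m`
(so `A_m = ∏_{i ≤ m} (1 - x^i t)` and `B_m = A_m⁻¹`), hence `A_m B_m = A_0 B_0 = (1 - t)(1 - t)⁻¹ = 1`
and only `j = 0` survives.
-/

/-- The Gaussian (q-)binomial coefficient `[a choose b]` with parameter `x`,
`∏_{j=1}^{b} (1 - x^{a-b+j})/(1 - x^j)`, an element of `ℚ(q)` when `x = q`;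
it is zero when `b > a`. -/
noncomputable def qbinom (x : RatFunc ℚ) (a b : ℕ) : RatFunc ℚ :=
  if b ≤ a then ∏ j ∈ Finset.range b, (1 - x ^ (a - b + j + 1)) / (1 - x ^ (j + 1)) else 0

/-- The indeterminate `q` of the field of rational functions `ℚ(q)`. -/
noncomputable def q : RatFunc ℚ := RatFunc.X

open Finset PowerSeries

def qfac {R : Type*} [CommRing R] (x : R) (n : ℕ) : R :=
  ∏ j ∈ range n, (1 - x ^ (j + 1))

lemma qfac_succ {R : Type*} [CommRing R] (x : R) (n : ℕ) :
    qfac x (n + 1) = qfac x n * (1 - x ^ (n + 1)) :=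
  prod_range_succ _ _

lemma qfac_ne_zero {R : Type*} [CommRing R] [IsDomain R] {x : R} (hx : ∀ i : ℕ, x ^ (i + 1) ≠ 1)
    (n : ℕ) : qfac x n ≠ 0 :=
  prod_ne_zero_iff.2 fun i _ => sub_ne_zero.2 (hx i).symm

lemma coeff_one_sub_C_mul_X_mul_succ {R : Type*} [Ring R] (c : R) (f : PowerSeries R) (n : ℕ) :
    coeff (n + 1) ((1 - C c * X) * f) = coeff (n + 1) f - c * coeff n f := by
  rw [sub_mul, one_mul, mul_assoc, map_sub, coeff_C_mul, coeff_succ_X_mul]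

section QBinom

variable {x : RatFunc ℚ}

lemma qbinom_zero_right (a : ℕ) : qbinom x a 0 = 1 := by
  simp [qbinom]

lemma qbinom_of_lt {a b : ℕ} (h : a < b) : qbinom x a b = 0 := by
  simp [qbinom, not_le.2 h]

lemma qbinom_eq_qfac_div (hx : ∀ i : ℕ, x ^ (i + 1) ≠ 1) {n k d : ℕ} (h : k + d = n) :
    qbinom x n k = qfac x n / (qfac x k * qfac x d) := by
  subst h
  have hsplit : qfac x (k + d) = qfac x d * ∏ j ∈ range k, (1 - x ^ (d + j + 1)) := by
    rw [qfac, add_comm k d, prod_range_add]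
    rfl
  rw [qbinom, if_pos (Nat.le_add_right k d), Nat.add_sub_cancel_left, prod_div_distrib, hsplit,
    ← qfac, mul_comm (qfac x k), ← div_div, mul_div_cancel_left₀ _ (qfac_ne_zero hx d)]

lemma qbinom_self (hx : ∀ i : ℕ, x ^ (i + 1) ≠ 1) (n : ℕ) : qbinom x n n = 1 := by
  rw [qbinom_eq_qfac_div hx (add_zero n), show qfac x 0 = 1 from prod_range_zero _, mul_one,
    div_self (qfac_ne_zero hx n)]

lemma qbinom_succ_succ_of_le (hx : ∀ i : ℕ, x ^ (i + 1) ≠ 1) {n k : ℕ} (h : n ≤ k) :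
    qbinom x (n + 1) (k + 1) = qbinom x n k := by
  rcases h.eq_or_lt with rfl | h
  · rw [qbinom_self hx, qbinom_self hx]
  · rw [qbinom_of_lt h, qbinom_of_lt (by omega)]

lemma qbinom_succ_succ (hx : ∀ i : ℕ, x ^ (i + 1) ≠ 1) (n k : ℕ) :
    qbinom x (n + 1) (k + 1) = qbinom x n k + x ^ (k + 1) * qbinom x n (k + 1) := by
  rcases lt_or_ge k n with h | h
  · obtain ⟨d, rfl⟩ : ∃ d, n = k + d + 1 := ⟨n - k - 1, by omega⟩
    rw [qbinom_eq_qfac_div hx (show k + 1 + (d + 1) = k + d + 1 + 1 by ring),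
      qbinom_eq_qfac_div hx (show k + (d + 1) = k + d + 1 by ring),
      qbinom_eq_qfac_div hx (show k + 1 + d = k + d + 1 by ring),
      qfac_succ x (k + d + 1), qfac_succ x k, qfac_succ x d]
    have := qfac_ne_zero hx
    have := sub_ne_zero.2 (hx k).symm
    have := sub_ne_zero.2 (hx d).symm
    field_simp
    ring
  · rw [qbinom_succ_succ_of_le hx h, qbinom_of_lt (Nat.lt_succ_of_le h), mul_zero, add_zero]

lemma qbinom_succ_succ' (hx : ∀ i : ℕ, x ^ (i + 1) ≠ 1) (n k : ℕ) :
    qbinom x (n + 1) (k + 1) = x ^ (n - k) * qbinom x n k + qbinom x n (k + 1) := by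
  rcases lt_or_ge k n with h | h
  · obtain ⟨d, rfl⟩ : ∃ d, n = k + d + 1 := ⟨n - k - 1, by omega⟩
    rw [qbinom_eq_qfac_div hx (show k + 1 + (d + 1) = k + d + 1 + 1 by ring),
      qbinom_eq_qfac_div hx (show k + (d + 1) = k + d + 1 by ring),
      qbinom_eq_qfac_div hx (show k + 1 + d = k + d + 1 by ring),
      show k + d + 1 - k = d + 1 by omega, qfac_succ x (k + d + 1), qfac_succ x k, qfac_succ x d]
    have := qfac_ne_zero hx
    have := sub_ne_zero.2 (hx k).symm
    have := sub_ne_zero.2 (hx d).symm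
    field_simp
    ring
  · rw [qbinom_succ_succ_of_le hx h, qbinom_of_lt (Nat.lt_succ_of_le h), Nat.sub_eq_zero_of_le h,
      pow_zero, one_mul, add_zero]

end QBinom

noncomputable def alternatingQBinomSeries (x : RatFunc ℚ) (m : ℕ) : PowerSeries (RatFunc ℚ) :=
  PowerSeries.mk fun k => (-1) ^ k * x ^ k.choose 2 * qbinom x (m + 1) k

noncomputable def qBinomSeries (x : RatFunc ℚ) (m : ℕ) : PowerSeries (RatFunc ℚ) :=
  PowerSeries.mk fun l => qbinom x (m + l) m

section Series

variable {x : RatFunc ℚ}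

lemma alternatingQBinomSeries_zero (hx : ∀ i : ℕ, x ^ (i + 1) ≠ 1) :
    alternatingQBinomSeries x 0 = 1 - X := by
  ext (_ | _ | k)
  · simp [alternatingQBinomSeries, qbinom_zero_right]
  · simp [alternatingQBinomSeries, qbinom_self hx]
  · simp [alternatingQBinomSeries, qbinom_of_lt, coeff_X]

lemma qBinomSeries_zero : qBinomSeries x 0 = PowerSeries.mk 1 := by
  ext l
  simp [qBinomSeries, qbinom_zero_right]

lemma alternatingQBinomSeries_succ (hx : ∀ i : ℕ, x ^ (i + 1) ≠ 1) (m : ℕ) :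
    alternatingQBinomSeries x (m + 1) = (1 - C (x ^ (m + 1)) * X) * alternatingQBinomSeries x m := by
  ext (_ | k)
  · simp [alternatingQBinomSeries, qbinom_zero_right]
  · rw [coeff_one_sub_C_mul_X_mul_succ]
    simp only [alternatingQBinomSeries, coeff_mk]
    rw [qbinom_succ_succ' hx]
    rcases le_or_gt k (m + 1) with hk | hk
    · have hexp : x ^ (k + 1).choose 2 * x ^ (m + 1 - k) = x ^ (m + 1) * x ^ k.choose 2 := by
        have hchoose : (k + 1).choose 2 = k.choose 2 + k := by
          rw [Nat.choose_succ_succ', Nat.choose_one_right, add_comm]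
        rw [← pow_add, ← pow_add, hchoose]
        congr 1
        omega
      linear_combination (-(-1) ^ k * qbinom x (m + 1) k) * hexp
    · rw [qbinom_of_lt hk]
      ring

lemma one_sub_C_mul_X_mul_qBinomSeries_succ (hx : ∀ i : ℕ, x ^ (i + 1) ≠ 1) (m : ℕ) :
    (1 - C (x ^ (m + 1)) * X) * qBinomSeries x (m + 1) = qBinomSeries x m := by
  ext (_ | l)
  · simp [qBinomSeries, qbinom_self hx]
  · rw [coeff_one_sub_C_mul_X_mul_succ]
    simp only [qBinomSeries, coeff_mk]
    rw [show m + 1 + (l + 1) = m + l + 1 + 1 by ring, show m + 1 + l = m + l + 1 by ring,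
      qbinom_succ_succ hx, add_sub_cancel_right]
    rfl

lemma alternatingQBinomSeries_mul_qBinomSeries (hx : ∀ i : ℕ, x ^ (i + 1) ≠ 1) (m : ℕ) :
    alternatingQBinomSeries x m * qBinomSeries x m = 1 := by
  induction m with
  | zero => rw [alternatingQBinomSeries_zero hx, qBinomSeries_zero, mul_comm,
      mk_one_mul_one_sub_eq_one]
  | succ m ih => rw [alternatingQBinomSeries_succ hx, mul_comm (1 - _), mul_assoc,
      one_sub_C_mul_X_mul_qBinomSeries_succ hx, ih]

theorem sum_range_alternating_qbinom_mul_qbinom (hx : ∀ i : ℕ, x ^ (i + 1) ≠ 1) (m j : ℕ) :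
    ∑ k ∈ range (j + 1), (-1) ^ k * x ^ k.choose 2 * qbinom x (m + 1) k * qbinom x (m + (j - k)) m
      = if j = 0 then 1 else 0 := by
  have h := congrArg (coeff j) (alternatingQBinomSeries_mul_qBinomSeries hx m)
  rw [coeff_mul, Nat.sum_antidiagonal_eq_sum_range_succ
    (fun k l => coeff k (alternatingQBinomSeries x m) * coeff l (qBinomSeries x m)), coeff_one]
    at h
  simpa only [alternatingQBinomSeries, qBinomSeries, coeff_mk] using h

end Series

lemma sum_range_sum_range_sub_eq_sum_range_sum_range {M : Type*} [AddCommMonoid M] (n : ℕ)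
    (f : ℕ → ℕ → M) :
    ∑ k ∈ range (n + 1), ∑ l ∈ range (n - k + 1), f k l
      = ∑ j ∈ range (n + 1), ∑ k ∈ range (j + 1), f k (j - k) := by
  rw [sum_range_diag_flip]
  exact sum_congr rfl fun k hk => by rw [Nat.sub_add_comm (mem_range_succ_iff.1 hk)]

lemma q_pow_ne_one {i : ℕ} (hi : 0 < i) : q ^ i ≠ 1 := by
  intro h
  have hdeg := congrArg RatFunc.intDegree h
  rw [q, ← RatFunc.algebraMap_X, ← map_pow, RatFunc.intDegree_polynomial,
    Polynomial.natDegree_X_pow, RatFunc.intDegree_one] at hdeg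
  omega

theorem stmt_19_general (n m p a b c : ℕ) (hb : 0 < b) :
    ∑ k ∈ Finset.range (n + 1), ∑ l ∈ Finset.range (n - k + 1),
      (-1 : RatFunc ℚ) ^ k *
        q ^ (a * Nat.choose (n - k - l) 2 + b * Nat.choose k 2) *
        qbinom (q ^ c) (p + (n - k - l)) p * qbinom (q ^ b) (m + 1) k *
        qbinom (q ^ b) (m + l) m
    = q ^ (a * Nat.choose n 2) * qbinom (q ^ c) (p + n) p := by
  have hx : ∀ i : ℕ, (q ^ b) ^ (i + 1) ≠ 1 := fun i => by
    rw [← pow_mul]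
    exact q_pow_ne_one (by positivity)
  rw [sum_range_sum_range_sub_eq_sum_range_sum_range]
  have hfactor : ∀ j, ∑ k ∈ range (j + 1),
      (-1 : RatFunc ℚ) ^ k * q ^ (a * (n - k - (j - k)).choose 2 + b * k.choose 2) *
        qbinom (q ^ c) (p + (n - k - (j - k))) p * qbinom (q ^ b) (m + 1) k *
        qbinom (q ^ b) (m + (j - k)) m
      = q ^ (a * (n - j).choose 2) * qbinom (q ^ c) (p + (n - j)) p *
        if j = 0 then 1 else 0 := by
    intro j
    rw [← sum_range_alternating_qbinom_mul_qbinom hx, mul_sum]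
    refine sum_congr rfl fun k hk => ?_
    rw [show n - k - (j - k) = n - j by have := mem_range_succ_iff.1 hk; omega, pow_add, pow_mul]
    ring
  rw [sum_congr rfl fun j _ => hfactor j, sum_range_succ', sum_eq_zero fun j _ => by simp]
  simp

theorem stmt_19 (n m p a b c : ℕ) (hb : 0 < b) (hc : 0 < c) :
    ∑ k ∈ Finset.range (n + 1), ∑ l ∈ Finset.range (n - k + 1),
      (-1 : RatFunc ℚ) ^ k *
        q ^ (a * Nat.choose (n - k - l) 2 + b * Nat.choose k 2) *
        qbinom (q ^ c) (p + (n - k - l)) p * qbinom (q ^ b) (m + 1) k *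
        qbinom (q ^ b) (m + l) m
    = q ^ (a * Nat.choose n 2) * qbinom (q ^ c) (p + n) p :=
  stmt_19_general n m p a b c hb
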